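/- arXiv:2004.12694 — 3 statements merged into one kernel-verified Lean document; each statement's English description precedes it below -/
import Mathlib

section
/- Let L be a nondegenerate lattice and G ⊂ O(L) a subgroup of prime order p. Then the quotient group L/(L^G ⊕ L_G) is an elementary abelian p-group, i.e. isomorphic to (Z/pZ)^a for some a ≥ 0. -/
/-!
For `g` with `g ^ p = 1`, the norm `N = 1 + g + ⋯ + g ^ (p - 1)` satisfies `(g - 1) N = 0`
and `N ^ 2 = p N`. Hence the splitting `p x = N x + (p x - N x)` writes `p x` as a
`g`-invariant vector plus a vector killed by `N`.
-/

open Finset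

section GeomSum

variable {A : Type*} [Ring A] {a : A} {n : ℕ}

theorem sub_one_mul_geom_sum_eq_zero_of_pow_eq_one (h : a ^ n = 1) :
    (a - 1) * ∑ i ∈ range n, a ^ i = 0 := by
  rw [mul_geom_sum, h, sub_self]

theorem pow_mul_geom_sum_of_pow_eq_one (h : a ^ n = 1) (k : ℕ) :
    a ^ k * ∑ i ∈ range n, a ^ i = ∑ i ∈ range n, a ^ i := by
  have hfix : a * ∑ i ∈ range n, a ^ i = ∑ i ∈ range n, a ^ i := by
    rw [← sub_eq_zero, ← sub_one_mul, sub_one_mul_geom_sum_eq_zero_of_pow_eq_one h]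
  induction k with
  | zero => rw [pow_zero, one_mul]
  | succ k ih => rw [pow_succ', mul_assoc, ih, hfix]

theorem geom_sum_mul_sub_geom_sum_eq_zero_of_pow_eq_one (h : a ^ n = 1) :
    (∑ i ∈ range n, a ^ i) * (n - ∑ i ∈ range n, a ^ i) = 0 := by
  have hsq : (∑ i ∈ range n, a ^ i) * ∑ i ∈ range n, a ^ i = n * ∑ i ∈ range n, a ^ i := by
    rw [sum_mul, sum_congr rfl fun k _ => pow_mul_geom_sum_of_pow_eq_one h k, sum_const,
      card_range, nsmul_eq_mul]
  rw [mul_sub, hsq, (Nat.cast_commute n _).eq, sub_self]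

end GeomSum

section Module

variable {R M : Type*} [Ring R] [AddCommGroup M] [Module R M]

theorem LinearMap.add_apply_mem_ker_sup_ker {u v a b : Module.End R M} (hu : u * a = 0)
    (hv : v * b = 0) (x : M) : (a + b) x ∈ ker u ⊔ ker v :=
  Submodule.add_mem_sup (LinearMap.range_le_ker_iff.mpr hu ⟨x, rfl⟩)
    (LinearMap.range_le_ker_iff.mpr hv ⟨x, rfl⟩)

theorem Module.End.nsmul_mem_ker_sub_one_sup_ker_geom_sum {f : Module.End R M} {n : ℕ}
    (h : f ^ n = 1) (x : M) :
    n • x ∈ LinearMap.ker (f - 1) ⊔ LinearMap.ker (∑ i ∈ range n, f ^ i) := by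
  simpa using LinearMap.add_apply_mem_ker_sup_ker
    (sub_one_mul_geom_sum_eq_zero_of_pow_eq_one h)
    (geom_sum_mul_sub_geom_sum_eq_zero_of_pow_eq_one h) x

end Module

theorem stmt3_general {L : Type} [AddCommGroup L] [Module ℤ L]
    (p : ℕ)
    (g : L ≃ₗ[ℤ] L)
    (hord : g ^ p = 1) :
    ∀ x : L, (p : ℤ) • x ∈
      LinearMap.ker (g.toLinearMap - LinearMap.id) ⊔
        LinearMap.ker (∑ i ∈ Finset.range p, (g ^ i).toLinearMap) := by
  intro x
  have hpow (k : ℕ) : (g ^ k).toLinearMap = g.toLinearMap ^ k :=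
    map_pow LinearEquiv.automorphismGroup.toLinearMapMonoidHom g k
  have hord' : g.toLinearMap ^ p = 1 := by rw [← hpow, hord]; rfl
  simp_rw [natCast_zsmul, hpow, ← Module.End.one_eq_id]
  exact Module.End.nsmul_mem_ker_sub_one_sup_ker_geom_sum hord' x

/-- If `G ⊂ O(L)` is generated by an isometry `g` of prime order `p` of a
nondegenerate lattice `L`, then the quotient `L/(L^G ⊕ L_G)` is an elementary abelian
`p`-group: every element of `L` multiplied by `p` lands in `L^G ⊕ L_G`
(where `L^G = Ker(g − id)` and `L_G = Ker(id + g + ⋯ + g^{p−1})`). -/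
theorem stmt3 {L : Type} [AddCommGroup L] [Module ℤ L] [Module.Free ℤ L] [Module.Finite ℤ L]
    (B : LinearMap.BilinForm ℤ L) (hsymm : ∀ x y, B x y = B y x)
    (hnd : ∀ x : L, (∀ y : L, B x y = 0) → x = 0)
    (p : ℕ) (hp : p.Prime)
    (g : L ≃ₗ[ℤ] L) (hiso : ∀ x y, B (g x) (g y) = B x y)
    (hord : g ^ p = 1) (hne : g ≠ 1) :
    ∀ x : L, (p : ℤ) • x ∈
      LinearMap.ker (g.toLinearMap - LinearMap.id) ⊔
        LinearMap.ker (∑ i ∈ Finset.range p, (g ^ i).toLinearMap) :=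
  stmt3_general p g hord
end

section
/- Let L = U^{⊕3} ⊕ [−2]^{⊕2} and let G ⊂ O(L) be a subgroup of order 2 generated by φ whose induced action on the discriminant group L*/L ≅ (Z/2Z)² is trivial. Then both the coinvariant sublattice L_G = Ker(φ + id) and the invariant sublattice L^G = Ker(φ − id) are 2-elementary lattices. -/
/-!
Write `φ^* F = F ∘ φ` for `F ∈ L*`. Triviality of `φ` on `L*/L` gives, for every `F`, a vector `v`
with `B(v, ·) = φ^* F - F`, and nondegeneracy together with `φ² = 1` forces `φ v = -v`.
On `L_G = Ker(φ + 1)` we have `φ^* F = -F`, so `-v ∈ L_G` represents `2F` there.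
On `L^G = Ker(φ - 1)` we use that `L` itself is 2-elementary: `2F = B(u, ·)` with `φ u = u + 2v`,
so `u + v ∈ L^G` represents `2F` there. Every functional on `L_G` or `L^G` extends to `L`, since a
kernel `Ker ψ ⊆ L` has torsion-free, hence free, cokernel.
-/

/-- The discriminant group of a lattice: `Hom(L,ℤ)` modulo the image of `L` under
`x ↦ B(x,·)`. -/
noncomputable abbrev discQuot {M : Type} [AddCommGroup M] [Module ℤ M]
    (B : LinearMap.BilinForm ℤ M) :=
  (Module.Dual ℤ M) ⧸ LinearMap.range B

/-- Restriction of a bilinear form to a submodule. -/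
noncomputable def latRestrict {M : Type} [AddCommGroup M] [Module ℤ M]
    (B : LinearMap.BilinForm ℤ M) (W : Submodule ℤ M) : LinearMap.BilinForm ℤ W :=
  LinearMap.compl₁₂ B { W.subtype with map_smul' := fun c x => (int_smul_eq_zsmul _ c (x : M)).symm }
    { W.subtype with map_smul' := fun c x => (int_smul_eq_zsmul _ c (x : M)).symm }

/-- The Gram matrix of `L = U⊕U⊕U⊕[−2]⊕[−2]`. -/
def LGram : Matrix (Fin 8) (Fin 8) ℤ :=
  !![0,1,0,0,0,0,0,0;
     1,0,0,0,0,0,0,0;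
     0,0,0,1,0,0,0,0;
     0,0,1,0,0,0,0,0;
     0,0,0,0,0,1,0,0;
     0,0,0,0,1,0,0,0;
     0,0,0,0,0,0,-2,0;
     0,0,0,0,0,0,0,-2]

/-- The bilinear form of `L`. -/
noncomputable def BL : LinearMap.BilinForm ℤ (Fin 8 → ℤ) := Matrix.toLinearMap₂' ℤ LGram

open Module

theorem Submodule.exists_retraction_of_projective_quotient {R M : Type*} [Ring R]
    [AddCommGroup M] [Module R M] (N : Submodule R M) [Projective R (M ⧸ N)] :
    ∃ π : M →ₗ[R] N, ∀ y : N, π y = y := by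
  obtain ⟨σ, hσ⟩ := N.mkQ.exists_rightInverse_of_surjective N.range_mkQ
  have hmem : ∀ x, x - σ (N.mkQ x) ∈ N := fun x => by
    rw [← Submodule.Quotient.mk_eq_zero, Submodule.Quotient.mk_sub]
    exact sub_eq_zero.2 (LinearMap.congr_fun hσ (N.mkQ x)).symm
  refine ⟨(LinearMap.id - σ ∘ₗ N.mkQ).codRestrict N hmem, fun y => Subtype.ext ?_⟩
  simp [(Submodule.Quotient.mk_eq_zero N).2 y.2]

theorem LinearMap.projective_quotient_ker {R M M' : Type*} [CommRing R] [IsDomain R]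
    [IsPrincipalIdealRing R] [AddCommGroup M] [Module R M] [AddCommGroup M'] [Module R M']
    [Free R M'] [Module.Finite R M'] (ψ : M →ₗ[R] M') : Projective R (M ⧸ ker ψ) :=
  let b := Submodule.basisOfPid (Free.chooseBasis R M') (range ψ)
  .of_basis (b.2.map ψ.quotKerEquivRange.symm)

theorem LinearMap.exists_dual_extend_ker {M M' : Type*} [AddCommGroup M] [Module ℤ M]
    [AddCommGroup M'] [Module ℤ M'] [Free ℤ M'] [Module.Finite ℤ M'] (ψ : M →ₗ[ℤ] M')
    (f : Dual ℤ (ker ψ)) : ∃ F : Dual ℤ M, ∀ y : ker ψ, F y = f y := by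
  have := ψ.projective_quotient_ker
  obtain ⟨π, hπ⟩ := (ker ψ).exists_retraction_of_projective_quotient
  -- `f` is linear for the `ℤ`-module structure of the additive group `ker ψ`, `π` for that of
  -- the submodule; the two agree on integer scalars.
  refine ⟨{ toFun := fun x => f (π x), map_add' := by simp, map_smul' := fun c x => ?_ },
    by simp [hπ]⟩
  simpa using (congrArg f (map_intCast_smul π ℤ ℤ c x)).trans (map_intCast_smul f ℤ ℤ c (π x))

theorem latRestrict_apply {M : Type} [AddCommGroup M] [Module ℤ M] (B : LinearMap.BilinForm ℤ M)
    (W : Submodule ℤ M) (w y : W) : latRestrict B W w y = B w y := rfl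

theorem two_smul_discQuot_latRestrict_ker_eq_zero {M M' : Type} [AddCommGroup M] [Module ℤ M]
    [AddCommGroup M'] [Module ℤ M'] [Free ℤ M'] [Module.Finite ℤ M']
    {B : LinearMap.BilinForm ℤ M} {ψ : M →ₗ[ℤ] M'}
    (h : ∀ F : Dual ℤ M, ∃ w ∈ LinearMap.ker ψ, ∀ y ∈ LinearMap.ker ψ, B w y = 2 * F y)
    (x : discQuot (latRestrict B (LinearMap.ker ψ))) : 2 • x = 0 := by
  obtain ⟨f, rfl⟩ := Submodule.Quotient.mk_surjective _ x
  obtain ⟨F, hF⟩ := ψ.exists_dual_extend_ker f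
  obtain ⟨w, hw, hwF⟩ := h F
  rw [← Submodule.Quotient.mk_smul, Submodule.Quotient.mk_eq_zero]
  refine ⟨⟨w, hw⟩, LinearMap.ext fun y => ?_⟩
  rw [latRestrict_apply, hwF y y.2, hF, LinearMap.smul_apply, two_smul, two_mul]

section Involution

variable {M : Type} [AddCommGroup M] [Module ℤ M] {B : LinearMap.BilinForm ℤ M}
  {φ : M →ₗ[ℤ] M}

theorem apply_eq_neg_of_eq_comp_sub (hB : B.SeparatingLeft)
    (hadj : LinearMap.IsAdjointPair B B φ φ) (hφ : Function.Involutive φ) {F : Dual ℤ M}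
    {v : M} (hv : B v = F ∘ₗ φ - F) : φ v = -v := by
  rw [eq_neg_iff_add_eq_zero]
  refine hB _ fun y => ?_
  rw [map_add, LinearMap.add_apply, hadj, hv, LinearMap.sub_apply, LinearMap.sub_apply,
    LinearMap.comp_apply, LinearMap.comp_apply, hφ]
  ring

theorem exists_mem_ker_add_forall_eq_two_mul (hB : B.SeparatingLeft)
    (hadj : LinearMap.IsAdjointPair B B φ φ) (hφ : Function.Involutive φ)
    (hdisc : ∀ F : Dual ℤ M, F ∘ₗ φ - F ∈ LinearMap.range B) (F : Dual ℤ M) :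
    ∃ w ∈ LinearMap.ker (φ + LinearMap.id), ∀ y ∈ LinearMap.ker (φ + LinearMap.id),
      B w y = 2 * F y := by
  obtain ⟨v, hv⟩ := hdisc F
  have hφv := apply_eq_neg_of_eq_comp_sub hB hadj hφ hv
  refine ⟨-v, by simp [hφv], fun y hy => ?_⟩
  rw [LinearMap.mem_ker, LinearMap.add_apply, LinearMap.id_apply, add_eq_zero_iff_eq_neg] at hy
  rw [map_neg, LinearMap.neg_apply, hv, LinearMap.sub_apply, LinearMap.comp_apply, hy, map_neg]
  ring

theorem exists_mem_ker_sub_forall_eq_two_mul (hB : B.SeparatingLeft)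
    (hadj : LinearMap.IsAdjointPair B B φ φ) (hφ : Function.Involutive φ)
    (hdisc : ∀ F : Dual ℤ M, F ∘ₗ φ - F ∈ LinearMap.range B)
    (h2 : ∀ F : Dual ℤ M, (2 : ℤ) • F ∈ LinearMap.range B) (F : Dual ℤ M) :
    ∃ w ∈ LinearMap.ker (φ - LinearMap.id), ∀ y ∈ LinearMap.ker (φ - LinearMap.id),
      B w y = 2 * F y := by
  obtain ⟨v, hv⟩ := hdisc F
  have hφv := apply_eq_neg_of_eq_comp_sub hB hadj hφ hv
  obtain ⟨u, hu⟩ := h2 F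
  have hφu : φ u = u + v + v := by
    rw [← sub_eq_zero]
    refine hB _ fun y => ?_
    rw [map_sub, LinearMap.sub_apply, hadj]
    simp only [map_add, LinearMap.add_apply, hu, hv, LinearMap.smul_apply, LinearMap.sub_apply,
      LinearMap.comp_apply, smul_eq_mul]
    ring
  refine ⟨u + v, ?_, fun y hy => ?_⟩
  · rw [LinearMap.mem_ker, LinearMap.sub_apply, LinearMap.id_apply, map_add, hφu, hφv]
    abel
  · rw [LinearMap.mem_ker, LinearMap.sub_apply, LinearMap.id_apply, sub_eq_zero] at hy
    rw [map_add, LinearMap.add_apply, hu, hv, LinearMap.smul_apply, LinearMap.sub_apply,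
      LinearMap.comp_apply, hy, smul_eq_mul]
    ring

end Involution

theorem Matrix.separatingLeft_toLinearMap₂'_of_mul_eq_smul_one {n R : Type*} [Fintype n]
    [DecidableEq n] [CommRing R] [IsDomain R] {A N : Matrix n n R} {c : R} (hc : c ≠ 0)
    (h : A * N = c • 1) : (Matrix.toLinearMap₂' R A).SeparatingLeft (R := R) := by
  refine LinearMap.separatingLeft_toLinearMap₂'_of_det_ne_zero'
    (left_ne_zero_of_mul (b := N.det) ?_)
  rw [← Matrix.det_mul, h, Matrix.det_smul, Matrix.det_one, mul_one]
  exact pow_ne_zero _ hc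

theorem Matrix.smul_mem_range_toLinearMap₂'_of_mul_eq_smul_one {n R : Type*} [Fintype n]
    [DecidableEq n] [CommRing R] {A N : Matrix n n R} {c : R} (h : N * A = c • 1)
    (F : Dual R (n → R)) :
    c • F ∈ LinearMap.range (Matrix.toLinearMap₂' R A : LinearMap.BilinForm R (n → R)) := by
  set f := (dotProductEquiv R n).symm F
  have hf : ∀ y, f ⬝ᵥ y = F y := LinearMap.congr_fun ((dotProductEquiv R n).apply_symm_apply F)
  refine ⟨Matrix.vecMul f N, LinearMap.ext fun y => ?_⟩
  rw [Matrix.toLinearMap₂'_apply', Matrix.dotProduct_mulVec, Matrix.vecMul_vecMul, h,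
    Matrix.vecMul_smul, Matrix.vecMul_one, smul_dotProduct, hf]
  rfl

-- `LGramDual = 2 • LGram⁻¹`; the two identities below say that `L` is 2-elementary.
def LGramDual : Matrix (Fin 8) (Fin 8) ℤ :=
  !![0,2,0,0,0,0,0,0;
     2,0,0,0,0,0,0,0;
     0,0,0,2,0,0,0,0;
     0,0,2,0,0,0,0,0;
     0,0,0,0,0,2,0,0;
     0,0,0,0,2,0,0,0;
     0,0,0,0,0,0,-1,0;
     0,0,0,0,0,0,0,-1]

theorem LGram_mul_LGramDual : LGram * LGramDual = 2 • 1 := by decide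

theorem LGramDual_mul_LGram : LGramDual * LGram = 2 • 1 := by decide

theorem BL_separatingLeft : BL.SeparatingLeft :=
  Matrix.separatingLeft_toLinearMap₂'_of_mul_eq_smul_one two_ne_zero LGram_mul_LGramDual

theorem two_smul_mem_range_BL (F : Dual ℤ (Fin 8 → ℤ)) : (2 : ℤ) • F ∈ LinearMap.range BL :=
  Matrix.smul_mem_range_toLinearMap₂'_of_mul_eq_smul_one LGramDual_mul_LGram F

theorem stmt8_general (φ : (Fin 8 → ℤ) ≃ₗ[ℤ] (Fin 8 → ℤ))
    (hiso : ∀ x y, BL (φ x) (φ y) = BL x y)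
    (hord : φ * φ = 1)
    (hdisc : ∀ f : Module.Dual ℤ (Fin 8 → ℤ),
      f ∘ₗ φ.toLinearMap - f ∈ LinearMap.range BL) :
    (∀ x : discQuot (latRestrict BL (LinearMap.ker (φ.toLinearMap + LinearMap.id))),
        2 • x = 0) ∧
    (∀ x : discQuot (latRestrict BL (LinearMap.ker (φ.toLinearMap - LinearMap.id))),
        2 • x = 0) := by
  have hφ : Function.Involutive φ := fun x => LinearEquiv.congr_fun hord x
  have hadj : LinearMap.IsAdjointPair BL BL φ φ := fun x y => by rw [← hiso x (φ y), hφ y]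
  exact ⟨two_smul_discQuot_latRestrict_ker_eq_zero
      (exists_mem_ker_add_forall_eq_two_mul BL_separatingLeft hadj hφ hdisc),
    two_smul_discQuot_latRestrict_ker_eq_zero
      (exists_mem_ker_sub_forall_eq_two_mul BL_separatingLeft hadj hφ hdisc
        two_smul_mem_range_BL)⟩

/-- Let `L = U^{⊕3} ⊕ [−2]^{⊕2}` and `G ⊂ O(L)` of order 2 generated by `φ`
acting trivially on the discriminant group `L*/L ≅ (ℤ/2ℤ)²` (i.e. for every `f ∈ L*` the
functional `f∘φ − f` lies in the image of `L`).  Then both the coinvariant sublattice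
`L_G = Ker(φ + id)` and the invariant sublattice `L^G = Ker(φ − id)` are 2-elementary:
their discriminant groups are killed by 2. -/
theorem stmt8 (φ : (Fin 8 → ℤ) ≃ₗ[ℤ] (Fin 8 → ℤ))
    (hiso : ∀ x y, BL (φ x) (φ y) = BL x y)
    (hord : φ * φ = 1) (hne : φ ≠ 1)
    (hdisc : ∀ f : Module.Dual ℤ (Fin 8 → ℤ),
      f ∘ₗ φ.toLinearMap - f ∈ LinearMap.range BL) :
    (∀ x : discQuot (latRestrict BL (LinearMap.ker (φ.toLinearMap + LinearMap.id))),
        2 • x = 0) ∧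
    (∀ x : discQuot (latRestrict BL (LinearMap.ker (φ.toLinearMap - LinearMap.id))),
        2 • x = 0) :=
  stmt8_general φ hiso hord hdisc
end

section
/- There is no primitive embedding of the lattice U(2) ⊕ U(2) ⊕ [−4] into L = U^{⊕3} ⊕ [−2]^{⊕2}. -/
/-- The Gram matrix of `U(2) ⊕ U(2) ⊕ [−4]`. -/
def SGram : Matrix (Fin 5) (Fin 5) ℤ :=
  !![0,2,0,0,0;
     2,0,0,0,0;
     0,0,0,2,0;
     0,0,2,0,0;
     0,0,0,0,-4]

/-!
Reducing mod 2, a primitive embedding `f` gives a 5-dimensional subspace `V` of `𝔽₂⁸` on which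
the form `LGram mod 2` vanishes identically, because `SGram ≡ 0 mod 2`. The radical of this form
is spanned by the two `[−2]` basis vectors, so it is 2-dimensional, and a totally isotropic
subspace of dimension `(8 + 2) / 2` must contain it. Hence some `f a` is congruent mod 2 to the
first `[−2]` basis vector; then its norm is `2 (mod 4)`, whereas all norms in `U(2) ⊕ U(2) ⊕ [−4]`
are divisible by 4.
-/

open Module Matrix LinearMap

theorem LinearMap.BilinForm.ker_le_of_le_orthogonal {K V : Type*} [Field K] [AddCommGroup V]
    [Module K V] [FiniteDimensional K V] {B : LinearMap.BilinForm K V} {W : Submodule K V}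
    (hW : W ≤ B.orthogonal W)
    (hdim : finrank K V + finrank K (LinearMap.ker B) ≤ 2 * finrank K W) :
    LinearMap.ker B ≤ W := by
  have hsum := B.finrank_add_finrank_orthogonal' W
  have hWW := Submodule.finrank_mono hW
  have hinf : W ⊓ LinearMap.ker B = LinearMap.ker B :=
    Submodule.eq_of_le_of_finrank_le inf_le_right (by omega)
  exact inf_eq_right.mp hinf

theorem Matrix.toLin'_map_apply {R S m n : Type*} [CommSemiring R] [CommSemiring S] [Fintype n]
    [DecidableEq n] (φ : R →+* S) (A : Matrix m n R) (x : n → R) :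
    toLin' (A.map φ) (φ ∘ x) = φ ∘ toLin' A x := by
  ext i
  simp only [toLin'_apply, Function.comp_apply, RingHom.map_mulVec]

theorem Matrix.toLinearMap₂'_map_apply {R S m n : Type*} [CommSemiring R] [CommSemiring S]
    [Fintype m] [Fintype n] [DecidableEq m] [DecidableEq n] (φ : R →+* S) (G : Matrix m n R)
    (x : m → R) (y : n → R) :
    toLinearMap₂' S (G.map φ) (φ ∘ x) (φ ∘ y) = φ (toLinearMap₂' R G x y) := by
  rw [toLinearMap₂'_apply', toLinearMap₂'_apply', RingHom.map_dotProduct]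
  congr 1
  ext i
  simp only [Function.comp_apply, RingHom.map_mulVec]

theorem Matrix.injective_toLin'_map_intCastRingHom {m n : Type*} [Fintype n] [DecidableEq n]
    (A : Matrix m n ℤ) (p : ℕ) (hinj : Function.Injective (toLin' A))
    (hsat : ∀ v : m → ℤ, (p : ℤ) • v ∈ range (toLin' A) → v ∈ range (toLin' A)) :
    Function.Injective (toLin' (A.map (Int.castRingHom (ZMod p)))) := by
  rw [← ker_eq_bot, ker_eq_bot']
  intro c hc
  obtain ⟨a, rfl⟩ := (ZMod.ringHom_surjective (Int.castRingHom (ZMod p))).comp_left c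
  have hdvd : ∀ i, (p : ℤ) ∣ toLin' A a i := fun i => by
    rw [← ZMod.intCast_zmod_eq_zero_iff_dvd]
    exact congrFun ((toLin'_map_apply _ A a).symm.trans hc) i
  choose v hv using hdvd
  obtain ⟨t, ht⟩ := hsat v ⟨a, funext hv⟩
  have hat : a = (p : ℤ) • t := hinj (by rw [map_smul, ht]; exact funext hv)
  ext j
  simp [hat]

theorem SGram_mod_two_eq_zero : SGram.map (Int.castRingHom (ZMod 2)) = 0 := by
  decide

def LFormModTwo : LinearMap.BilinForm (ZMod 2) (Fin 8 → ZMod 2) :=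
  toLinearMap₂' (ZMod 2) (LGram.map (Int.castRingHom (ZMod 2)))

theorem LFormModTwo_apply (v w : Fin 8 → ZMod 2) :
    LFormModTwo v w = v 0 * w 1 + v 1 * w 0 + v 2 * w 3 + v 3 * w 2 + v 4 * w 5 + v 5 * w 4 := by
  have htwo : (2 : ZMod 2) = 0 := rfl
  simp [htwo, LFormModTwo, toLinearMap₂'_apply', LGram, dotProduct, mulVec, Fin.sum_univ_eight]

theorem ker_LFormModTwo :
    ker LFormModTwo = Submodule.span (ZMod 2) {Pi.single 6 1, Pi.single 7 1} := by
  ext v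
  rw [Submodule.mem_span_pair, mem_ker]
  constructor
  · intro hv
    have hv' (w : Fin 8 → ZMod 2) :
        v 0 * w 1 + v 1 * w 0 + v 2 * w 3 + v 3 * w 2 + v 4 * w 5 + v 5 * w 4 = 0 := by
      rw [← LFormModTwo_apply, hv, LinearMap.zero_apply]
    have hcoord : v 0 = 0 ∧ v 1 = 0 ∧ v 2 = 0 ∧ v 3 = 0 ∧ v 4 = 0 ∧ v 5 = 0 :=
      ⟨by simpa using hv' (Pi.single 1 1), by simpa using hv' (Pi.single 0 1),
        by simpa using hv' (Pi.single 3 1), by simpa using hv' (Pi.single 2 1),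
        by simpa using hv' (Pi.single 5 1), by simpa using hv' (Pi.single 4 1)⟩
    refine ⟨v 6, v 7, ?_⟩
    ext i
    fin_cases i <;> simp [hcoord]
  · rintro ⟨a, b, rfl⟩
    ext w
    simp [LFormModTwo_apply]

theorem finrank_ker_LFormModTwo_le : finrank (ZMod 2) (ker LFormModTwo) ≤ 2 := by
  rw [ker_LFormModTwo]
  exact (finrank_span_le_card _).trans (by simpa using Finset.card_le_two)

theorem four_dvd_toLinearMap₂'_SGram_self (a : Fin 5 → ℤ) :
    4 ∣ toLinearMap₂' ℤ SGram a a := by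
  refine ⟨a 0 * a 1 + a 2 * a 3 - a 4 * a 4, ?_⟩
  simp only [toLinearMap₂'_apply', dotProduct, mulVec, Fin.sum_univ_five, SGram, of_apply,
    cons_val', cons_val_fin_one, cons_val_zero, cons_val_one, cons_val]
  ring

theorem toLinearMap₂'_LGram_self (x : Fin 8 → ℤ) :
    toLinearMap₂' ℤ LGram x x =
      2 * (x 0 * x 1 + x 2 * x 3 + x 4 * x 5 - x 6 * x 6 - x 7 * x 7) := by
  simp only [toLinearMap₂'_apply', dotProduct, mulVec, Fin.sum_univ_eight, LGram, of_apply,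
    cons_val', cons_val_fin_one, cons_val_zero, cons_val_one, cons_val]
  ring

theorem not_four_dvd_toLinearMap₂'_LGram_self (x : Fin 8 → ℤ)
    (hx : Int.castRingHom (ZMod 2) ∘ x = Pi.single 6 1) :
    ¬ 4 ∣ toLinearMap₂' ℤ LGram x x := by
  have hodd : Odd (x 0 * x 1 + x 2 * x 3 + x 4 * x 5 - x 6 * x 6 - x 7 * x 7) := by
    have h (i : Fin 8) : (x i : ZMod 2) = (Pi.single 6 1 : Fin 8 → ZMod 2) i := congrFun hx i
    rw [← ZMod.intCast_eq_one_iff_odd]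
    push_cast
    simp [h]
  obtain ⟨k, hk⟩ := hodd
  rw [toLinearMap₂'_LGram_self, hk]
  omega

/-- There is no primitive embedding of the lattice `U(2) ⊕ U(2) ⊕ [−4]`
into `L = U^{⊕3} ⊕ [−2]^{⊕2}`. -/
theorem stmt11 :
    ¬ ∃ f : (Fin 5 → ℤ) →ₗ[ℤ] (Fin 8 → ℤ),
        Function.Injective f ∧
        (∀ x y, Matrix.toLinearMap₂' ℤ SGram x y =
          Matrix.toLinearMap₂' ℤ LGram (f x) (f y)) ∧
        (∀ (v : Fin 8 → ℤ) (n : ℤ), n ≠ 0 → n • v ∈ LinearMap.range f →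
          v ∈ LinearMap.range f) := by
  rintro ⟨f, hinj, hiso, hprim⟩
  obtain ⟨A, rfl⟩ := Matrix.toLin'.surjective f
  set π := Int.castRingHom (ZMod 2)
  have hlift := (ZMod.ringHom_surjective π).comp_left (α := Fin 5)
  set V := range (toLin' (A.map π))
  have hdimV : finrank (ZMod 2) V = 5 := by
    rw [finrank_range_of_inj (A.injective_toLin'_map_intCastRingHom 2 hinj
      fun v => hprim v 2 two_ne_zero), finrank_fin_fun]
  have hisotropic : V ≤ LFormModTwo.orthogonal V := by
    rintro _ ⟨c, rfl⟩ _ ⟨d, rfl⟩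
    obtain ⟨a, rfl⟩ := hlift c
    obtain ⟨b, rfl⟩ := hlift d
    beta_reduce
    rw [toLin'_map_apply, toLin'_map_apply, LFormModTwo, toLinearMap₂'_map_apply, ← hiso,
      ← toLinearMap₂'_map_apply, SGram_mod_two_eq_zero, map_zero, LinearMap.zero_apply,
      LinearMap.zero_apply]
  have hker : ker LFormModTwo ≤ V := by
    refine LinearMap.BilinForm.ker_le_of_le_orthogonal hisotropic ?_
    have := finrank_ker_LFormModTwo_le
    rw [hdimV, finrank_fin_fun]
    omega
  have hrad : (Pi.single 6 1 : Fin 8 → ZMod 2) ∈ ker LFormModTwo := by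
    rw [ker_LFormModTwo]
    exact Submodule.subset_span (Or.inl rfl)
  obtain ⟨c, hc⟩ := hker hrad
  obtain ⟨a, rfl⟩ := hlift c
  rw [toLin'_map_apply] at hc
  exact not_four_dvd_toLinearMap₂'_LGram_self _ hc
    (hiso a a ▸ four_dvd_toLinearMap₂'_SGram_self a)
end
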